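/- arXiv:2103.06153 — 2 statements merged into one kernel-verified Lean document; each statement's English description precedes it below -/
import Mathlib

section
/- For any real vector x and real numbers w_{ji} with corresponding terms, the quadratic form identity/inequality: for nodes i, j, k, and any weight w_{j,i} < 0, w_{j,i}(x_j − x_i)² ≥ 2 w_{j,i}(x_k − x_j)² + 2 w_{j,i}(x_k − x_i)². Consequently, if graph G_B is obtained from G by deleting a negative edge (j,i) with weight w_{j,i} < 0 and adding 2 w_{j,i} to the weights of edges (k,j) and (k,i), then L − L_B is positive semi-definite. -/
/-!
Since the Laplacian is linear in the weights, `L − L_B` is the Laplacian of the weight change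
`w − w_B`, which off the diagonal equals `w_{ji} v_p v_q` for `v = e_i + e_j − 2 e_k`.
As `∑ v = 0`, this gives `L − L_B = −w_{ji} v vᵀ`, a nonnegative multiple of a rank-one positive
semidefinite matrix. Accordingly, the gap in the scalar inequality is `−w_{ji} (2x_k − x_i − x_j)²`.
-/

/-- Combinatorial graph Laplacian of a weighted undirected graph on `Fin n`. -/
noncomputable def graphLaplacian {n : ℕ} (w : Matrix (Fin n) (Fin n) ℝ) :
    Matrix (Fin n) (Fin n) ℝ :=
  Matrix.of fun i j => if i = j then ∑ k, w i k else - w i j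

open Finset Matrix

lemma graphLaplacian_sub {n : ℕ} (w w' : Matrix (Fin n) (Fin n) ℝ) :
    graphLaplacian w - graphLaplacian w' = graphLaplacian (w - w') := by
  ext p q
  by_cases h : p = q <;> simp [graphLaplacian, h, sum_sub_distrib, neg_add_eq_sub]

lemma graphLaplacian_eq_neg_smul_vecMulVec {n : ℕ} {w : Matrix (Fin n) (Fin n) ℝ}
    {v : Fin n → ℝ} {c : ℝ} (hv : ∑ p, v p = 0) (hdiag : ∀ p, w p p = 0)
    (hoff : ∀ p q, p ≠ q → w p q = c * (v p * v q)) :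
    graphLaplacian w = (-c) • vecMulVec v v := by
  ext p q
  rcases eq_or_ne p q with rfl | hpq
  · have hrow : ∀ r, w p r = c * (v p * v r) - if p = r then c * (v p * v p) else 0 := by
      intro r
      rcases eq_or_ne p r with rfl | hpr
      · simp [hdiag]
      · simp [hoff p r hpr, hpr]
    simp [graphLaplacian, hrow, sum_sub_distrib, ← mul_sum, hv, vecMulVec_apply]
  · simp [graphLaplacian, hpq, hoff p q hpq, vecMulVec_apply]

lemma two_mul_sq_add_two_mul_sq_le_of_nonpos {w : ℝ} (hw : w ≤ 0) (a b c : ℝ) :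
    2 * w * (c - a) ^ 2 + 2 * w * (c - b) ^ 2 ≤ w * (a - b) ^ 2 := by
  have h : (a - b) ^ 2 ≤ 2 * (c - a) ^ 2 + 2 * (c - b) ^ 2 := by
    nlinarith [sq_nonneg (2 * c - a - b)]
  calc 2 * w * (c - a) ^ 2 + 2 * w * (c - b) ^ 2 = w * (2 * (c - a) ^ 2 + 2 * (c - b) ^ 2) := by
        ring
    _ ≤ w * (a - b) ^ 2 := mul_le_mul_of_nonpos_left h hw

def edgeRerouteVector {ι : Type*} [DecidableEq ι] (i j k : ι) : ι → ℝ :=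
  Pi.single i 1 + Pi.single j 1 - Pi.single k 2

lemma sum_edgeRerouteVector {ι : Type*} [Fintype ι] [DecidableEq ι] (i j k : ι) :
    ∑ p, edgeRerouteVector i j k p = 0 := by
  norm_num [edgeRerouteVector, sum_sub_distrib, sum_add_distrib]

lemma edgeRerouteVector_apply_of_ne {ι : Type*} [DecidableEq ι] {i j k p : ι}
    (hi : p ≠ i) (hj : p ≠ j) (hk : p ≠ k) : edgeRerouteVector i j k p = 0 := by
  simp [edgeRerouteVector, hi, hj, hk]

section RemoveNegativeEdge

variable {n : ℕ} {w wB : Matrix (Fin n) (Fin n) ℝ} {i j k : Fin n}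

lemma apply_eq_of_not_rerouted (hij : i ≠ j) (hik : i ≠ k) (hjk : j ≠ k)
    (hrest : ∀ p q : Fin n,
      ({p, q} : Set (Fin n)) ≠ {j, i} → ({p, q} : Set (Fin n)) ≠ {k, j} →
      ({p, q} : Set (Fin n)) ≠ {k, i} → wB p q = w p q) {p q : Fin n}
    (h : p = q ∨ (p ≠ i ∧ p ≠ j ∧ p ≠ k) ∨ (q ≠ i ∧ q ≠ j ∧ q ≠ k)) : wB p q = w p q := by
  apply hrest <;> simp only [ne_eq, Set.pair_eq_pair_iff] <;> grind

lemma sub_apply_eq_mul_edgeRerouteVector (hsymm : ∀ p q, w p q = w q p)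
    (hij : i ≠ j) (hik : i ≠ k) (hjk : j ≠ k)
    (hji : wB j i = 0) (hij' : wB i j = 0)
    (hkj : wB k j = w k j + 2 * w j i) (hjk' : wB j k = w j k + 2 * w j i)
    (hki : wB k i = w k i + 2 * w j i) (hik' : wB i k = w i k + 2 * w j i)
    (hrest : ∀ p q : Fin n,
      ({p, q} : Set (Fin n)) ≠ {j, i} → ({p, q} : Set (Fin n)) ≠ {k, j} →
      ({p, q} : Set (Fin n)) ≠ {k, i} → wB p q = w p q) {p q : Fin n} (hpq : p ≠ q) :
    (w - wB) p q = w j i * (edgeRerouteVector i j k p * edgeRerouteVector i j k q) := by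
  rw [Matrix.sub_apply]
  by_cases hp : p ≠ i ∧ p ≠ j ∧ p ≠ k
  · simp [apply_eq_of_not_rerouted hij hik hjk hrest (.inr (.inl hp)),
      edgeRerouteVector_apply_of_ne hp.1 hp.2.1 hp.2.2]
  by_cases hq : q ≠ i ∧ q ≠ j ∧ q ≠ k
  · simp [apply_eq_of_not_rerouted hij hik hjk hrest (.inr (.inr hq)),
      edgeRerouteVector_apply_of_ne hq.1 hq.2.1 hq.2.2]
  simp only [not_and_or, not_not] at hp hq
  rcases hp with hp | hp | hp <;> rcases hq with hq | hq | hq <;> subst p q <;>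
    first
    | exact absurd rfl hpq
    | simp [edgeRerouteVector, hji, hij', hkj, hjk', hki, hik', hsymm i j,
        hij, hik, hjk, hij.symm, hik.symm, hjk.symm] <;> ring

end RemoveNegativeEdge

theorem laplacian_sub_posSemidef_of_remove_negative_edge_general {n : ℕ}
    (w wB : Matrix (Fin n) (Fin n) ℝ)
    (hsymm : ∀ p q, w p q = w q p)
    (i j k : Fin n) (hij : i ≠ j) (hik : i ≠ k) (hjk : j ≠ k)
    (hneg : w j i < 0)
    (hji : wB j i = 0) (hij' : wB i j = 0)
    (hkj : wB k j = w k j + 2 * w j i) (hjk' : wB j k = w j k + 2 * w j i)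
    (hki : wB k i = w k i + 2 * w j i) (hik' : wB i k = w i k + 2 * w j i)
    (hrest : ∀ p q : Fin n,
      ({p, q} : Set (Fin n)) ≠ {j, i} → ({p, q} : Set (Fin n)) ≠ {k, j} →
      ({p, q} : Set (Fin n)) ≠ {k, i} → wB p q = w p q) :
    (∀ x : Fin n → ℝ,
      2 * w j i * (x k - x j) ^ 2 + 2 * w j i * (x k - x i) ^ 2
        ≤ w j i * (x j - x i) ^ 2) ∧
    (graphLaplacian w - graphLaplacian wB).PosSemidef := by
  refine ⟨fun x => two_mul_sq_add_two_mul_sq_le_of_nonpos hneg.le (x j) (x i) (x k), ?_⟩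
  have hdiag : ∀ p, (w - wB) p p = 0 := fun p => by
    rw [Matrix.sub_apply, apply_eq_of_not_rerouted hij hik hjk hrest (.inl rfl), sub_self]
  rw [graphLaplacian_sub, graphLaplacian_eq_neg_smul_vecMulVec (sum_edgeRerouteVector i j k) hdiag
    fun p q => sub_apply_eq_mul_edgeRerouteVector hsymm hij hik hjk hji hij' hkj hjk' hki hik' hrest]
  simpa using (posSemidef_vecMulVec_self_star (edgeRerouteVector i j k)).smul (neg_nonneg.2 hneg.le)

/-- Proposition 4(a): the scalar inequality
`w_{j,i}(x_j − x_i)² ≥ 2 w_{j,i}(x_k − x_j)² + 2 w_{j,i}(x_k − x_i)²` for `w_{j,i} < 0`,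
and consequently removing a negative edge `(j,i)` while adding `2 w_{j,i}` to the
weights of edges `(k,j)` and `(k,i)` keeps `L − L_B` positive semi-definite. -/
theorem laplacian_sub_posSemidef_of_remove_negative_edge {n : ℕ}
    (w wB : Matrix (Fin n) (Fin n) ℝ)
    (hsymm : ∀ p q, w p q = w q p) (hdiag : ∀ p, w p p = 0)
    (i j k : Fin n) (hij : i ≠ j) (hik : i ≠ k) (hjk : j ≠ k)
    (hneg : w j i < 0)
    (hji : wB j i = 0) (hij' : wB i j = 0)
    (hkj : wB k j = w k j + 2 * w j i) (hjk' : wB j k = w j k + 2 * w j i)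
    (hki : wB k i = w k i + 2 * w j i) (hik' : wB i k = w i k + 2 * w j i)
    (hrest : ∀ p q : Fin n,
      ({p, q} : Set (Fin n)) ≠ {j, i} → ({p, q} : Set (Fin n)) ≠ {k, j} →
      ({p, q} : Set (Fin n)) ≠ {k, i} → wB p q = w p q) :
    (∀ x : Fin n → ℝ,
      2 * w j i * (x k - x j) ^ 2 + 2 * w j i * (x k - x i) ^ 2
        ≤ w j i * (x j - x i) ^ 2) ∧
    (graphLaplacian w - graphLaplacian wB).PosSemidef :=
  laplacian_sub_posSemidef_of_remove_negative_edge_general w wB hsymm i j k hij hik hjk hneg hji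
    hij' hkj hjk' hki hik' hrest
end

section
/- Let M be a real symmetric matrix whose smallest eigenvalue λ_min(M) has an eigenvector v with all entries strictly positive. Let S = diag(1/v₁, …, 1/vₙ) and C = S M S⁻¹. Then every Gershgorin disc left-end of C is at least λ_min(M), i.e., for every row i, C(i,i) − Σ_{j≠i} |C(i,j)| ≥ λ_min(M) holds whenever all off-diagonal entries of M are nonpositive; moreover the row sums satisfy Σ_j C(i,j) = λ_min(M) for every i. -/
section GershgorinAlignment

variable {ι : Type*} [Fintype ι]

theorem Matrix.sum_mul_div_eq_of_mulVec_eq_smul {K : Type*} [Field K] {M : Matrix ι ι K}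
    {v : ι → K} {μ : K} (h : M.mulVec v = μ • v) {i : ι} (hi : v i ≠ 0) :
    ∑ j, M i j * v j / v i = μ := by
  have hrow : ∑ j, M i j * v j = μ * v i := by
    simpa only [Matrix.mulVec, dotProduct, Pi.smul_apply, smul_eq_mul] using congrFun h i
  rw [← Finset.sum_div, hrow, mul_div_cancel_right₀ _ hi]

theorem sub_sum_erase_abs_eq_sum_of_nonpos {R : Type*} [AddCommGroup R] [LinearOrder R]
    [IsOrderedAddMonoid R] [DecidableEq ι] (f : ι → R) (i : ι) (hf : ∀ j, j ≠ i → f j ≤ 0) :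
    f i - ∑ j ∈ Finset.univ.erase i, |f j| = ∑ j, f j := by
  rw [← Finset.add_sum_erase _ _ (Finset.mem_univ i), sub_eq_add_neg, ← Finset.sum_neg_distrib]
  congr 1
  refine Finset.sum_congr rfl fun j hj => ?_
  rw [abs_of_nonpos (hf j (Finset.ne_of_mem_erase hj)), neg_neg]

end GershgorinAlignment

/-- GDPA (single-color case): if the smallest eigenvalue of a symmetric `M` has a
strictly positive eigenvector `v`, then for `C = S M S⁻¹` with `S = diag(1/vᵢ)`
(i.e. `C i j = M i j * v j / v i`), every row sum of `C` equals `λ_min(M)`, and if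
all off-diagonal entries of `M` are nonpositive, every Gershgorin disc left-end of
`C` is at least `λ_min(M)`. -/
theorem gdpa_positive_eigenvector {n : ℕ}
    (M : Matrix (Fin n) (Fin n) ℝ) (hM : M.IsHermitian)
    (v : Fin n → ℝ) (hv : ∀ i, 0 < v i)
    (heig : M.mulVec v = (⨅ i : Fin n, hM.eigenvalues i) • v)
    (C : Matrix (Fin n) (Fin n) ℝ)
    (hC : ∀ i j, C i j = M i j * v j / v i) :
    (∀ i, ∑ j, C i j = ⨅ i' : Fin n, hM.eigenvalues i') ∧
    ((∀ i j, i ≠ j → M i j ≤ 0) →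
      ∀ i, (⨅ i' : Fin n, hM.eigenvalues i') ≤
        C i i - ∑ j ∈ Finset.univ.erase i, |C i j|) := by
  have hrow : ∀ i, ∑ j, C i j = ⨅ i' : Fin n, hM.eigenvalues i' := fun i => by
    simp only [hC]
    exact Matrix.sum_mul_div_eq_of_mulVec_eq_smul heig (hv i).ne'
  refine ⟨hrow, fun hoff i => ?_⟩
  have hC_nonpos : ∀ j, j ≠ i → C i j ≤ 0 := fun j hji => by
    rw [hC]
    exact div_nonpos_of_nonpos_of_nonneg
      (mul_nonpos_of_nonpos_of_nonneg (hoff i j hji.symm) (hv j).le) (hv i).le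
  rw [sub_sum_erase_abs_eq_sum_of_nonpos (C i) i hC_nonpos, hrow i]
end
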